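/- arXiv:1901.08054 — 9 statements merged into one kernel-verified Lean document; each statement's English description precedes it below -/
import Mathlib

section
/- Let n and d be positive integers with n ≥ d, and let M be a real n×d matrix whose entries are all nonnegative, such that every column of M sums to 1 and every row of M sums to at most 1. Then there exists a doubly stochastic n×n matrix D whose first d columns coincide with M, i.e. D(i,j) = M(i,j) for every row index i and every column index j < d. -/
/-!
Append to `M` a block of `n - d` equal columns whose `i`-th entry is the row deficit
`(1 - ∑ j, M i j) / (n - d)`. It is nonnegative by the row bound, and each new column sums
to `1` because the deficits total `n - d` (the entries of `M` total `d`). When `d = n` no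
column is added: the `n` row sums of `M` are at most `1` and total `n`, so each equals `1`.
-/

open Finset Matrix

section
variable {R ι κ : Type*} [AddCommMonoidWithOne R] [Fintype ι] [Fintype κ] {M : Matrix ι κ R}

lemma sum_sum_eq_card_of_sum_col_eq_one (hcol : ∀ j, ∑ i, M i j = 1) :
    ∑ i, ∑ j, M i j = Fintype.card κ := by
  rw [Finset.sum_comm (f := fun i j => M i j)]
  simp [hcol]

lemma sum_row_eq_one_of_card_eq [PartialOrder R] [IsOrderedCancelAddMonoid R]
    (hcol : ∀ j, ∑ i, M i j = 1) (hrow : ∀ i, ∑ j, M i j ≤ 1)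
    (hcard : Fintype.card κ = Fintype.card ι) (i : ι) : ∑ j, M i j = 1 := by
  have htotal : ∑ i, ∑ j, M i j = ∑ _i : ι, (1 : R) := by
    simp [sum_sum_eq_card_of_sum_col_eq_one hcol, hcard]
  exact (sum_eq_sum_iff_of_le fun i _ => hrow i).1 htotal i (mem_univ i)

end

section
variable {R ι κ ν : Type*} [Field R] [LinearOrder R] [IsStrictOrderedRing R]
  [Fintype κ] [Fintype ν] {M : Matrix ι κ R}

def fromColsSlack (M : Matrix ι κ R) (ν : Type*) [Fintype ν] : Matrix ι (κ ⊕ ν) R :=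
  fromCols M (of fun i _ => (1 - ∑ j, M i j) / Fintype.card ν)

lemma fromColsSlack_nonneg (hpos : ∀ i j, 0 ≤ M i j) (hrow : ∀ i, ∑ j, M i j ≤ 1) :
    ∀ i c, 0 ≤ fromColsSlack M ν i c
  | i, .inl j => hpos i j
  | i, .inr _ => div_nonneg (sub_nonneg.2 (hrow i)) (Nat.cast_nonneg _)

variable [Fintype ι]

lemma sum_row_fromColsSlack (hcol : ∀ j, ∑ i, M i j = 1) (hrow : ∀ i, ∑ j, M i j ≤ 1)
    (hcard : Fintype.card κ + Fintype.card ν = Fintype.card ι) (i : ι) :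
    ∑ c, fromColsSlack M ν i c = 1 := by
  simp only [fromColsSlack, Fintype.sum_sum_type, fromCols_apply_inl, fromCols_apply_inr,
    of_apply, sum_const, card_univ, nsmul_eq_mul]
  rcases (Fintype.card ν).eq_zero_or_pos with hν | hν
  · rw [hν, Nat.cast_zero, zero_mul, add_zero]
    exact sum_row_eq_one_of_card_eq hcol hrow (by omega) i
  · rw [mul_div_cancel₀ _ (by positivity)]
    ring

lemma sum_col_fromColsSlack (hcol : ∀ j, ∑ i, M i j = 1)
    (hcard : Fintype.card κ + Fintype.card ν = Fintype.card ι) (c : κ ⊕ ν) :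
    ∑ i, fromColsSlack M ν i c = 1 := by
  rcases c with j | l
  · exact hcol j
  · have hν : (Fintype.card ν : R) ≠ 0 := Nat.cast_ne_zero.2 (Fintype.card_pos_iff.2 ⟨l⟩).ne'
    simp only [fromColsSlack, fromCols_apply_inr, of_apply, ← sum_div, sum_sub_distrib,
      sum_sum_eq_card_of_sum_col_eq_one hcol, sum_const, card_univ, nsmul_one, ← hcard]
    push_cast
    rw [add_sub_cancel_left, div_self hν]

theorem exists_mem_doublyStochastic_extension [DecidableEq ι] (e : κ ⊕ ν ≃ ι)
    (hpos : ∀ i j, 0 ≤ M i j) (hcol : ∀ j, ∑ i, M i j = 1) (hrow : ∀ i, ∑ j, M i j ≤ 1) :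
    ∃ D ∈ doublyStochastic R ι, ∀ i j, D i (e (.inl j)) = M i j := by
  have hcard : Fintype.card κ + Fintype.card ν = Fintype.card ι := by
    rw [← Fintype.card_sum, Fintype.card_congr e]
  refine ⟨(fromColsSlack M ν).submatrix id e.symm, mem_doublyStochastic_iff_sum.2
    ⟨fun i c => fromColsSlack_nonneg hpos hrow i _, fun i => ?_, fun c => ?_⟩, fun i j => ?_⟩
  · simpa [e.symm.sum_comp] using sum_row_fromColsSlack hcol hrow hcard i
  · exact sum_col_fromColsSlack hcol hcard _
  · simp [fromColsSlack]

end

theorem exists_doublyStochastic_extension_general (n d : ℕ) (hnd : d ≤ n)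
    (M : Matrix (Fin n) (Fin d) ℝ)
    (hpos : ∀ i j, 0 ≤ M i j)
    (hcol : ∀ j, ∑ i, M i j = 1)
    (hrow : ∀ i, ∑ j, M i j ≤ 1) :
    ∃ D : Matrix (Fin n) (Fin n) ℝ,
      (∀ i j, 0 ≤ D i j) ∧ (∀ i, ∑ j, D i j = 1) ∧ (∀ j, ∑ i, D i j = 1) ∧
      ∀ (i : Fin n) (j : Fin d), D i (Fin.castLE hnd j) = M i j := by
  let e : Fin d ⊕ Fin (n - d) ≃ Fin n :=
    finSumFinEquiv.trans (finCongr (Nat.add_sub_cancel' hnd))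
  obtain ⟨D, hD, hDM⟩ := exists_mem_doublyStochastic_extension e hpos hcol hrow
  obtain ⟨hnonneg, hrows, hcols⟩ := mem_doublyStochastic_iff_sum.1 hD
  exact ⟨D, hnonneg, hrows, hcols, hDM⟩

/-- If `M` is an `n × d` real matrix (`n ≥ d`) with nonnegative entries whose columns all
sum to `1` and whose rows all sum to at most `1`, then `M` can be completed to a doubly
stochastic `n × n` matrix `D` whose first `d` columns are the columns of `M`. -/
theorem exists_doublyStochastic_extension (n d : ℕ) (hn : 0 < n) (hd : 0 < d) (hnd : d ≤ n)
    (M : Matrix (Fin n) (Fin d) ℝ)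
    (hpos : ∀ i j, 0 ≤ M i j)
    (hcol : ∀ j, ∑ i, M i j = 1)
    (hrow : ∀ i, ∑ j, M i j ≤ 1) :
    ∃ D : Matrix (Fin n) (Fin n) ℝ,
      (∀ i j, 0 ≤ D i j) ∧ (∀ i, ∑ j, D i j = 1) ∧ (∀ j, ∑ i, D i j = 1) ∧
      ∀ (i : Fin n) (j : Fin d), D i (Fin.castLE hnd j) = M i j :=
  exists_doublyStochastic_extension_general n d hnd M hpos hcol hrow
end

section
/- Let d be a positive integer, let p and q be probability vectors in ℝ^d with q(i) > 0 for every i, and let T be a doubly stochastic d×d matrix. Then Σ_j p(j)·ln p(j) ≥ Σ_i Σ_j T(i,j)·p(j)·ln q(i), where ln denotes the natural logarithm and the convention 0·ln 0 = 0 is used. -/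
/-!
Averaging `ln q` along column `j` of `T` and using concavity of `ln` (Jensen) bounds the right-hand
side by `∑ⱼ p j * ln r j`, where `r = qT` is again a positive probability vector because `T` is
doubly stochastic. Gibbs' inequality `∑ⱼ p j * ln r j ≤ ∑ⱼ p j * ln p j`, a summed form of
`ln x ≤ x - 1`, finishes the proof.
-/

open Finset Real

namespace Real

lemma mul_log_le_mul_log_add_sub {x y : ℝ} (hx : 0 ≤ x) (hy : 0 < y) :
    x * log y ≤ x * log x + (y - x) := by
  rcases hx.eq_or_lt with rfl | hx
  · simpa using hy.le
  have h := mul_le_mul_of_nonneg_left (log_le_sub_one_of_pos (div_pos hy hx)) hx.le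
  rw [log_div hy.ne' hx.ne', mul_sub, mul_sub, mul_div_cancel₀ _ hx.ne', mul_one] at h
  linarith

/-- Gibbs' inequality. -/
lemma sum_mul_log_le_sum_mul_log_self {ι : Type*} {s : Finset ι} {p r : ι → ℝ}
    (hp : ∀ i ∈ s, 0 ≤ p i) (hr : ∀ i ∈ s, 0 < r i) (hsum : ∑ i ∈ s, r i ≤ ∑ i ∈ s, p i) :
    ∑ i ∈ s, p i * log (r i) ≤ ∑ i ∈ s, p i * log (p i) := by
  have h := sum_le_sum fun i hi => mul_log_le_mul_log_add_sub (hp i hi) (hr i hi)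
  rw [sum_add_distrib, sum_sub_distrib] at h
  linarith

lemma sum_mul_log_le_log_sum_mul {ι : Type*} {s : Finset ι} {w x : ι → ℝ}
    (hw : ∀ i ∈ s, 0 ≤ w i) (hw₁ : ∑ i ∈ s, w i = 1) (hx : ∀ i ∈ s, 0 < x i) :
    ∑ i ∈ s, w i * log (x i) ≤ log (∑ i ∈ s, w i * x i) :=
  strictConcaveOn_log_Ioi.concaveOn.le_map_sum hw hw₁ hx

end Real

theorem klein_inequality_core_general (d : ℕ) (p q : Fin d → ℝ)
    (hp0 : ∀ i, 0 ≤ p i) (hp1 : ∑ i, p i = 1)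
    (hq0 : ∀ i, 0 < q i) (hq1 : ∑ i, q i = 1)
    (T : Matrix (Fin d) (Fin d) ℝ)
    (hT0 : ∀ i j, 0 ≤ T i j)
    (hTrow : ∀ i, ∑ j, T i j = 1) (hTcol : ∀ j, ∑ i, T i j = 1) :
    ∑ j, p j * Real.log (p j) ≥ ∑ i, ∑ j, T i j * p j * Real.log (q i) := by
  set r : Fin d → ℝ := fun j => ∑ i, T i j * q i
  have hr0 (j : Fin d) : 0 < r j :=
    (convex_Ioi (0 : ℝ)).sum_mem (fun i _ => hT0 i j) (hTcol j) fun i _ => hq0 i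
  have hr1 : ∑ j, r j = 1 := by
    simp only [r]
    rw [sum_comm]
    simp [← sum_mul, hTrow, hq1]
  calc ∑ i, ∑ j, T i j * p j * log (q i)
      = ∑ j, p j * ∑ i, T i j * log (q i) := by
        rw [sum_comm]
        simp only [mul_sum]
        exact sum_congr rfl fun j _ => sum_congr rfl fun i _ => by ring
    _ ≤ ∑ j, p j * log (r j) := sum_le_sum fun j _ =>
        mul_le_mul_of_nonneg_left
          (sum_mul_log_le_log_sum_mul (fun i _ => hT0 i j) (hTcol j) fun i _ => hq0 i) (hp0 j)
    _ ≤ ∑ j, p j * log (p j) :=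
        sum_mul_log_le_sum_mul_log_self (fun j _ => hp0 j) (fun j _ => hr0 j) (hr1.trans hp1.symm).le

/-- Classical core of Klein's inequality: for probability vectors `p`, `q` (with `q` strictly
positive) and a doubly stochastic matrix `T`,
`∑ⱼ p j * ln (p j) ≥ ∑ᵢ ∑ⱼ T i j * p j * ln (q i)`.
(Here `Real.log 0 = 0`, implementing the convention `0 · ln 0 = 0`.) -/
theorem klein_inequality_core (d : ℕ) (hd : 0 < d) (p q : Fin d → ℝ)
    (hp0 : ∀ i, 0 ≤ p i) (hp1 : ∑ i, p i = 1)
    (hq0 : ∀ i, 0 < q i) (hq1 : ∑ i, q i = 1)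
    (T : Matrix (Fin d) (Fin d) ℝ)
    (hT0 : ∀ i j, 0 ≤ T i j)
    (hTrow : ∀ i, ∑ j, T i j = 1) (hTcol : ∀ j, ∑ i, T i j = 1) :
    ∑ j, p j * Real.log (p j) ≥ ∑ i, ∑ j, T i j * p j * Real.log (q i) :=
  klein_inequality_core_general d p q hp0 hp1 hq0 hq1 T hT0 hTrow hTcol
end

section
/- Let d be a positive integer, let p and q be probability vectors in ℝ^d with q(i) > 0 for every i, and let T be a doubly stochastic d×d matrix. If Σ_j p(j)·ln p(j) = Σ_i Σ_j T(i,j)·p(j)·ln q(i) (with the convention 0·ln 0 = 0), then there exists a permutation π of {1,…,d} such that p(j) = q(π(j)) for every j. -/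
/-!
Write `gap i j = T i j * (q i - p j - p j * (log q i - log p j))`. The elementary inequality
`log x ≤ x - 1` makes every `gap i j` nonnegative, and the line sums of `T` together with the
hypothesis make `∑ i j, gap i j = 0`; hence `gap` vanishes, and since `log x = x - 1` only at
`x = 1`, `T i j ≠ 0` forces `p j = q i`. Counting mass of `T` on the block between the level sets
`{j | p j = c}` and `{i | q i = c}` once by columns and once by rows shows they have equally many
elements, which yields the permutation.
-/

open Finset

namespace Real

theorem mul_sub_log_lt_sub {p q : ℝ} (hp : 0 ≤ p) (hq : 0 < q) (hpq : p ≠ q) :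
    p * (log q - log p) < q - p := by
  rcases hp.eq_or_lt with rfl | hp
  · simpa using hq
  have hlog : log (q / p) < q / p - 1 :=
    log_lt_sub_one_of_pos (div_pos hq hp) (by rwa [ne_eq, div_eq_one_iff_eq hp.ne', eq_comm])
  calc p * (log q - log p) = p * log (q / p) := by rw [log_div hq.ne' hp.ne']
    _ < p * (q / p - 1) := mul_lt_mul_of_pos_left hlog hp
    _ = q - p := by field_simp

theorem mul_sub_log_le_sub {p q : ℝ} (hp : 0 ≤ p) (hq : 0 < q) :
    p * (log q - log p) ≤ q - p := by
  rcases eq_or_ne p q with rfl | hpq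
  · simp
  · exact (mul_sub_log_lt_sub hp hq hpq).le

end Real

section LineSums

variable {ι R : Type*} [Fintype ι]

theorem sum_sum_mul_left_of_row_sums [NonAssocSemiring R] {T : ι → ι → R}
    (hrow : ∀ i, ∑ j, T i j = 1) (f : ι → R) : ∑ i, ∑ j, T i j * f i = ∑ i, f i := by
  simp only [← sum_mul, hrow, one_mul]

theorem sum_sum_mul_right_of_col_sums [NonAssocSemiring R] {T : ι → ι → R}
    (hcol : ∀ j, ∑ i, T i j = 1) (g : ι → R) : ∑ i, ∑ j, T i j * g j = ∑ j, g j := by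
  rw [sum_comm]
  simp only [← sum_mul, hcol, one_mul]

theorem card_fiber_eq_of_line_sums_of_support {α : Type*} [DecidableEq α]
    [AddCommMonoidWithOne R] [CharZero R] {T : ι → ι → R} {p q : ι → α}
    (hrow : ∀ i, ∑ j, T i j = 1) (hcol : ∀ j, ∑ i, T i j = 1)
    (hsupp : ∀ i j, T i j ≠ 0 → p j = q i) (c : α) :
    #{j | p j = c} = #{i | q i = c} := by
  set B : Finset ι := {j | p j = c}
  set A : Finset ι := {i | q i = c}
  have hcol' : ∀ j ∈ B, ∑ i ∈ A, T i j = 1 := fun j hj => by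
    refine (sum_subset (subset_univ A) fun i _ hi => ?_).trans (hcol j)
    by_contra hT
    simp_all [A, B, hsupp i j hT]
  have hrow' : ∀ i ∈ A, ∑ j ∈ B, T i j = 1 := fun i hi => by
    refine (sum_subset (subset_univ B) fun j _ hj => ?_).trans (hrow i)
    by_contra hT
    simp_all [A, B, hsupp i j hT]
  have hcast : (#B : R) = #A :=
    calc (#B : R) = ∑ j ∈ B, ∑ i ∈ A, T i j := by simp [sum_congr rfl hcol']
      _ = ∑ i ∈ A, ∑ j ∈ B, T i j := sum_comm
      _ = #A := by simp [sum_congr rfl hrow']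
  exact_mod_cast hcast

theorem exists_perm_eq_of_line_sums_of_support {α : Type*}
    [AddCommMonoidWithOne R] [CharZero R] {T : ι → ι → R} {p q : ι → α}
    (hrow : ∀ i, ∑ j, T i j = 1) (hcol : ∀ j, ∑ i, T i j = 1)
    (hsupp : ∀ i j, T i j ≠ 0 → p j = q i) :
    ∃ π : Equiv.Perm ι, ∀ j, p j = q (π j) := by
  classical
  have hcard (c : α) : Fintype.card {j // p j = c} = Fintype.card {i // q i = c} := by
    simpa only [Fintype.card_subtype] using
      card_fiber_eq_of_line_sums_of_support hrow hcol hsupp c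
  let e (c : α) := Fintype.equivOfCardEq (hcard c)
  exact ⟨Equiv.ofFiberEquiv e, fun j => (Equiv.ofFiberEquiv_map e j).symm⟩

end LineSums

theorem klein_inequality_equality_case_general (d : ℕ) (p q : Fin d → ℝ)
    (hp0 : ∀ i, 0 ≤ p i) (hp1 : ∑ i, p i = 1)
    (hq0 : ∀ i, 0 < q i) (hq1 : ∑ i, q i = 1)
    (T : Matrix (Fin d) (Fin d) ℝ)
    (hT0 : ∀ i j, 0 ≤ T i j)
    (hTrow : ∀ i, ∑ j, T i j = 1) (hTcol : ∀ j, ∑ i, T i j = 1)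
    (heq : ∑ j, p j * Real.log (p j) = ∑ i, ∑ j, T i j * p j * Real.log (q i)) :
    ∃ π : Equiv.Perm (Fin d), ∀ j, p j = q (π j) := by
  set gap : Fin d → Fin d → ℝ :=
    fun i j => T i j * (q i - p j - p j * (Real.log (q i) - Real.log (p j)))
  have gap_nonneg (i j) : 0 ≤ gap i j :=
    mul_nonneg (hT0 i j) (sub_nonneg.2 (Real.mul_sub_log_le_sub (hp0 j) (hq0 i)))
  have gap_sum : ∑ i, ∑ j, gap i j = 0 := by
    have hsplit : ∑ i, ∑ j, gap i j = (∑ i, ∑ j, T i j * q i - ∑ i, ∑ j, T i j * p j)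
        - (∑ i, ∑ j, T i j * p j * Real.log (q i) - ∑ i, ∑ j, T i j * (p j * Real.log (p j))) := by
      simp only [gap, ← sum_sub_distrib]
      congr! 2; ring
    rw [hsplit, sum_sum_mul_left_of_row_sums hTrow, sum_sum_mul_right_of_col_sums hTcol,
      sum_sum_mul_right_of_col_sums hTcol, hp1, hq1, heq, sub_self, sub_self, sub_self]
  have gap_eq_zero (i j) : gap i j = 0 := by
    have hrow := (Fintype.sum_eq_zero_iff_of_nonneg fun i => sum_nonneg fun j _ =>
      gap_nonneg i j).1 gap_sum
    exact congrFun ((Fintype.sum_eq_zero_iff_of_nonneg (gap_nonneg i)).1 (congrFun hrow i)) j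
  refine exists_perm_eq_of_line_sums_of_support hTrow hTcol fun i j hT => ?_
  by_contra hpq
  have hlt := Real.mul_sub_log_lt_sub (hp0 j) (hq0 i) hpq
  exact (mul_pos ((hT0 i j).lt_of_ne' hT) (sub_pos.2 hlt)).ne' (gap_eq_zero i j)

/-- Equality case of the classical core of Klein's inequality: for probability vectors `p`, `q`
(with `q` strictly positive) and a doubly stochastic matrix `T`, if
`∑ⱼ p j * ln (p j) = ∑ᵢ ∑ⱼ T i j * p j * ln (q i)` then `p` is a permutation of `q`.
(Here `Real.log 0 = 0`, implementing the convention `0 · ln 0 = 0`.) -/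
theorem klein_inequality_equality_case (d : ℕ) (hd : 0 < d) (p q : Fin d → ℝ)
    (hp0 : ∀ i, 0 ≤ p i) (hp1 : ∑ i, p i = 1)
    (hq0 : ∀ i, 0 < q i) (hq1 : ∑ i, q i = 1)
    (T : Matrix (Fin d) (Fin d) ℝ)
    (hT0 : ∀ i j, 0 ≤ T i j)
    (hTrow : ∀ i, ∑ j, T i j = 1) (hTcol : ∀ j, ∑ i, T i j = 1)
    (heq : ∑ j, p j * Real.log (p j) = ∑ i, ∑ j, T i j * p j * Real.log (q i)) :
    ∃ π : Equiv.Perm (Fin d), ∀ j, p j = q (π j) :=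
  klein_inequality_equality_case_general d p q hp0 hp1 hq0 hq1 T hT0 hTrow hTcol heq
end

section
/- Let e₀, e₁, e₂, e₃ denote the standard basis of ℂ⁴, let ρ = diag(1/2, 1/2, 0, 0) and σ = diag(1/2, 0, 1/2, 0) as 4×4 complex matrices, and let S be the 4×4 permutation matrix exchanging e₀ ↔ e₂ and e₁ ↔ e₃. Then for every pair of 2×2 unitary matrices U₀, U₁ and every k ∈ {0,1}, the unitary W = (U₀ ⊕ U₁)·S^k (with U₀ ⊕ U₁ the block-diagonal matrix with blocks U₀ and U₁) satisfies W·ρ·W* ≠ σ. -/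
open Matrix

/-- The state `ρ = diag (1/2, 1/2, 0, 0)` of a doubled qubit: a mixture of two pure states
in the even sector `H₀ = span {e₀, e₁}`. -/
noncomputable def dqtRho : Matrix (Fin 4) (Fin 4) ℂ :=
  Matrix.diagonal ![1/2, 1/2, 0, 0]

/-- The state `σ = diag (1/2, 0, 1/2, 0)` of a doubled qubit: a mixture of a pure state in
the even sector and a pure state in the odd sector `H₁ = span {e₂, e₃}`. -/
noncomputable def dqtSigma : Matrix (Fin 4) (Fin 4) ℂ :=
  Matrix.diagonal ![1/2, 0, 1/2, 0]

/-- The permutation of the standard basis of `ℂ⁴` exchanging `e₀ ↔ e₂` and `e₁ ↔ e₃`. -/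
def dqtSwapPerm : Equiv.Perm (Fin 4) := (Equiv.swap 0 2).trans (Equiv.swap 1 3)

/-- The sector-exchanging unitary `S`, i.e. the permutation matrix of `e₀ ↔ e₂`, `e₁ ↔ e₃`. -/
noncomputable def dqtS : Matrix (Fin 4) (Fin 4) ℂ :=
  Matrix.of fun i j => if i = dqtSwapPerm j then 1 else 0

/-- The block-diagonal matrix `U₀ ⊕ U₁` on `ℂ⁴ = H₀ ⊕ H₁`. -/
noncomputable def dqtBlock (U₀ U₁ : Matrix (Fin 2) (Fin 2) ℂ) : Matrix (Fin 4) (Fin 4) ℂ :=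
  Matrix.reindex finSumFinEquiv finSumFinEquiv (Matrix.fromBlocks U₀ 0 0 U₁)

/-!
Block-diagonal matrices `U₀ ⊕ U₁` respect the superselection sectors: conjugating a matrix whose
only nonzero block is its `H₀`-block (resp. `H₁`-block) gives again such a matrix. Now `ρ` lives
in `H₀` and `S` carries it to `H₁`, so `(U₀ ⊕ U₁) Sᵏ ρ ((U₀ ⊕ U₁) Sᵏ)*` lives in a single sector,
whereas `σ` has weight `1/2` in each.
-/

section BlockConjugation

variable {m n α : Type*} [Fintype m] [Fintype n] [Semiring α] [StarRing α]

theorem Matrix.reindex_mul_mul_conjTranspose {p : Type*} [Fintype p] (e : m ≃ p)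
    (W M : Matrix m m α) :
    reindex e e W * reindex e e M * (reindex e e W)ᴴ = reindex e e (W * M * Wᴴ) := by
  simp only [reindex_apply, conjTranspose_submatrix, submatrix_mul_equiv]

theorem Matrix.fromBlocks_zero_zero_mul_mul_conjTranspose (U₀ : Matrix m m α) (U₁ : Matrix n n α)
    (A : Matrix m m α) (B : Matrix m n α) (C : Matrix n m α) (D : Matrix n n α) :
    fromBlocks U₀ 0 0 U₁ * fromBlocks A B C D * (fromBlocks U₀ 0 0 U₁)ᴴ =
      fromBlocks (U₀ * A * U₀ᴴ) (U₀ * B * U₁ᴴ) (U₁ * C * U₀ᴴ) (U₁ * D * U₁ᴴ) := by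
  simp [fromBlocks_conjTranspose, fromBlocks_multiply]

theorem Matrix.fromBlocks_zero_one_one_zero_mul_mul_conjTranspose [DecidableEq n]
    (A B C D : Matrix n n α) :
    fromBlocks 0 1 1 0 * fromBlocks A B C D * (fromBlocks 0 1 1 0 : Matrix (n ⊕ n) (n ⊕ n) α)ᴴ =
      fromBlocks D C B A := by
  simp [fromBlocks_conjTranspose, fromBlocks_multiply]

end BlockConjugation

noncomputable def dqtBlocks (A B C D : Matrix (Fin 2) (Fin 2) ℂ) : Matrix (Fin 4) (Fin 4) ℂ :=
  reindex finSumFinEquiv finSumFinEquiv (fromBlocks A B C D)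

theorem dqtBlocks_inj {A B C D A' B' C' D' : Matrix (Fin 2) (Fin 2) ℂ} :
    dqtBlocks A B C D = dqtBlocks A' B' C' D' ↔ A = A' ∧ B = B' ∧ C = C' ∧ D = D' := by
  rw [dqtBlocks, dqtBlocks, (reindex _ _).apply_eq_iff_eq, fromBlocks_inj]

theorem dqtBlock_mul_mul_conjTranspose (U₀ U₁ A B C D : Matrix (Fin 2) (Fin 2) ℂ) :
    dqtBlock U₀ U₁ * dqtBlocks A B C D * (dqtBlock U₀ U₁)ᴴ =
      dqtBlocks (U₀ * A * U₀ᴴ) (U₀ * B * U₁ᴴ) (U₁ * C * U₀ᴴ) (U₁ * D * U₁ᴴ) := by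
  rw [dqtBlock, dqtBlocks, reindex_mul_mul_conjTranspose,
    fromBlocks_zero_zero_mul_mul_conjTranspose, dqtBlocks]

theorem dqtS_eq_dqtBlocks : dqtS = dqtBlocks 0 1 1 0 := by
  ext i j
  fin_cases i <;> fin_cases j <;> rfl

theorem dqtS_mul_mul_conjTranspose (A B C D : Matrix (Fin 2) (Fin 2) ℂ) :
    dqtS * dqtBlocks A B C D * dqtSᴴ = dqtBlocks D C B A := by
  rw [dqtS_eq_dqtBlocks, dqtBlocks, dqtBlocks, reindex_mul_mul_conjTranspose,
    fromBlocks_zero_one_one_zero_mul_mul_conjTranspose, dqtBlocks]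

theorem dqtRho_eq_dqtBlocks : dqtRho = dqtBlocks (diagonal ![1/2, 1/2]) 0 0 0 := by
  ext i j
  fin_cases i <;> fin_cases j <;> rfl

theorem dqtSigma_eq_dqtBlocks :
    dqtSigma = dqtBlocks (diagonal ![1/2, 0]) 0 0 (diagonal ![1/2, 0]) := by
  ext i j
  fin_cases i <;> fin_cases j <;> rfl

theorem dqt_no_unitary_maps_rho_to_sigma_general
    (U₀ U₁ : Matrix (Fin 2) (Fin 2) ℂ)
    (k : Fin 2) :
    (dqtBlock U₀ U₁ * dqtS ^ (k : ℕ)) * dqtRho * (dqtBlock U₀ U₁ * dqtS ^ (k : ℕ))ᴴ ≠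
      dqtSigma := by
  have hσ₀ : (diagonal ![1/2, 0] : Matrix (Fin 2) (Fin 2) ℂ) ≠ 0 := fun h => by
    simpa using congrFun₂ h 0 0
  have hconj : ∀ A B M : Matrix (Fin 4) (Fin 4) ℂ, A * B * M * (A * B)ᴴ = A * (B * M * Bᴴ) * Aᴴ :=
    fun A B M => by simp only [conjTranspose_mul, mul_assoc]
  rw [hconj, dqtRho_eq_dqtBlocks, dqtSigma_eq_dqtBlocks]
  match k with
  | 0 =>
    rw [Fin.val_zero, pow_zero, one_mul, conjTranspose_one, mul_one,
      dqtBlock_mul_mul_conjTranspose, Ne, dqtBlocks_inj]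
    rintro ⟨-, -, -, hD⟩
    exact hσ₀ (by simpa using hD.symm)
  | 1 =>
    rw [Fin.val_one, pow_one, dqtS_mul_mul_conjTranspose, dqtBlock_mul_mul_conjTranspose, Ne,
      dqtBlocks_inj]
    rintro ⟨hA, -, -, -⟩
    exact hσ₀ (by simpa using hA.symm)

/-- No reversible channel of doubled quantum theory, i.e. no conjugation by a unitary of the
form `(U₀ ⊕ U₁) · Sᵏ` with `U₀, U₁ ∈ U(2)` and `k ∈ {0, 1}`, maps
`ρ = diag (1/2, 1/2, 0, 0)` to `σ = diag (1/2, 0, 1/2, 0)`. -/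
theorem dqt_no_unitary_maps_rho_to_sigma
    (U₀ U₁ : Matrix (Fin 2) (Fin 2) ℂ)
    (hU₀ : U₀ ∈ Matrix.unitaryGroup (Fin 2) ℂ)
    (hU₁ : U₁ ∈ Matrix.unitaryGroup (Fin 2) ℂ)
    (k : Fin 2) :
    (dqtBlock U₀ U₁ * dqtS ^ (k : ℕ)) * dqtRho * (dqtBlock U₀ U₁ * dqtS ^ (k : ℕ))ᴴ ≠
      dqtSigma :=
  dqt_no_unitary_maps_rho_to_sigma_general U₀ U₁ k
end

section
/- Let G be a compact Hausdorff second-countable topological group acting continuously on a nonempty compact Hausdorff second-countable topological space X, equipped with its Borel σ-algebra. Then there exists exactly one G-invariant Borel probability measure on X if and only if the action is transitive, i.e. for all x, y ∈ X there exists g ∈ G with g•x = y. -/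
open MeasureTheory Measure MulAction

/-!
Push a Haar probability measure `μ` of `G` forward along the orbit maps `g ↦ g • x`. Each
`μ.map (· • x)` is an invariant probability measure carried by the closed orbit of `x`, so
uniqueness forces any two orbits to meet, i.e. transitivity. Conversely, by Fubini every invariant
probability measure `ν` is the `ν`-average of the measures `μ.map (· • x)`; since compact groups
are unimodular these depend only on the orbit of `x`, so under transitivity `ν` equals each of them.
-/

theorem isMulRightInvariant_of_isProbabilityMeasure {G : Type*} [Group G] [TopologicalSpace G]
    [IsTopologicalGroup G] [CompactSpace G] [MeasurableSpace G] [BorelSpace G]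
    (μ : Measure G) [IsProbabilityMeasure μ] [μ.IsHaarMeasure] : μ.IsMulRightInvariant := by
  refine ⟨fun h ↦ ?_⟩
  have := isProbabilityMeasure_map (μ := μ) (measurable_mul_const h).aemeasurable
  exact isHaarMeasure_eq_of_isProbabilityMeasure _ _

theorem exists_isHaarMeasure_isProbabilityMeasure (G : Type*) [Group G] [TopologicalSpace G]
    [IsTopologicalGroup G] [CompactSpace G] [MeasurableSpace G] [BorelSpace G] :
    ∃ μ : Measure G, μ.IsHaarMeasure ∧ IsProbabilityMeasure μ := by
  refine ⟨haarMeasure ⊤, inferInstance, ⟨?_⟩⟩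
  simpa using haarMeasure_self (K₀ := (⊤ : TopologicalSpace.PositiveCompacts G))

theorem MulAction.isCompact_orbit {G X : Type*} [Group G] [MulAction G X] [TopologicalSpace G]
    [CompactSpace G] [TopologicalSpace X] [ContinuousSMul G X] (x : X) :
    IsCompact (orbit G x) :=
  isCompact_range (continuous_id.smul continuous_const)

section OrbitMeasure

variable {G X : Type*} [Group G] [MulAction G X] [MeasurableSpace G] [MeasurableSpace X]

noncomputable def orbitMeasure (μ : Measure G) (x : X) : Measure X :=
  μ.map (· • x)

variable [MeasurableSMul G X] (μ : Measure G)

theorem orbitMeasure_apply {s : Set X} (hs : MeasurableSet s) (x : X) :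
    orbitMeasure μ x s = μ ((· • x) ⁻¹' s) :=
  map_apply (measurable_smul_const x) hs

instance [IsProbabilityMeasure μ] (x : X) : IsProbabilityMeasure (orbitMeasure μ x) :=
  isProbabilityMeasure_map (measurable_smul_const x).aemeasurable

instance [MeasurableMul G] [μ.IsMulLeftInvariant] (x : X) :
    SMulInvariantMeasure G X (orbitMeasure μ x) :=
  smulInvariantMeasure_map μ _ (fun g h ↦ mul_smul g h x) (measurable_smul_const x)

theorem orbitMeasure_smul [MeasurableMul G] [μ.IsMulRightInvariant] (g : G) (x : X) :
    orbitMeasure μ (g • x) = orbitMeasure μ x := by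
  have hcomp : (· • g • x) = (· • x) ∘ (· * g) := by
    ext h
    simp [mul_smul]
  rw [orbitMeasure, hcomp, ← map_map (measurable_smul_const x) (measurable_mul_const g),
    map_mul_right_eq_self, orbitMeasure]

theorem orbitMeasure_orbit [IsProbabilityMeasure μ] (x : X) :
    orbitMeasure μ x (orbit G x) = 1 := by
  have huniv : (· • x) ⁻¹' orbit G x = Set.univ := Set.eq_univ_of_forall (mem_orbit x)
  refine le_antisymm prob_le_one ?_
  calc 1 = μ ((· • x) ⁻¹' orbit G x) := by rw [huniv, measure_univ]
    _ ≤ orbitMeasure μ x (orbit G x) := le_map_apply (measurable_smul_const x).aemeasurable _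

theorem orbitMeasure_orbit_of_notMem (x : X) {y : X} (hmeas : MeasurableSet (orbit G x))
    (hy : y ∉ orbit G x) : orbitMeasure μ y (orbit G x) = 0 := by
  have hempty : (· • y) ⁻¹' orbit G x = ∅ :=
    Set.eq_empty_of_forall_notMem fun g hg ↦
      hy (orbit_eq_iff.mp ((orbit_smul g y).symm.trans (orbit_eq_iff.mpr hg)))
  rw [orbitMeasure_apply μ hmeas, hempty, measure_empty]

theorem mem_orbit_of_orbitMeasure_eq [IsProbabilityMeasure μ] {x y : X}
    (hmeas : MeasurableSet (orbit G x)) (h : orbitMeasure μ x = orbitMeasure μ y) :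
    y ∈ orbit G x := by
  by_contra hy
  have := orbitMeasure_orbit_of_notMem μ x hmeas hy
  rw [← h, orbitMeasure_orbit] at this
  exact one_ne_zero this

theorem lintegral_orbitMeasure_apply [MeasurableSMul₂ G X] [IsProbabilityMeasure μ]
    (ν : Measure X) [SFinite ν] [SMulInvariantMeasure G X ν] {s : Set X} (hs : MeasurableSet s) :
    ∫⁻ x, orbitMeasure μ x s ∂ν = ν s := by
  have hE : MeasurableSet {p : G × X | p.1 • p.2 ∈ s} := measurable_smul hs
  calc ∫⁻ x, orbitMeasure μ x s ∂ν = μ.prod ν {p : G × X | p.1 • p.2 ∈ s} := by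
        simp only [prod_apply_symm hE, orbitMeasure_apply μ hs]
        rfl
    _ = ∫⁻ g, ν ((g • ·) ⁻¹' s) ∂μ := prod_apply hE
    _ = ν s := by simp [measure_preimage_smul]

theorem eq_orbitMeasure_of_isPretransitive [MeasurableSMul₂ G X] [IsPretransitive G X]
    [MeasurableMul G] [IsProbabilityMeasure μ] [μ.IsMulRightInvariant]
    (ν : Measure X) [IsProbabilityMeasure ν] [SMulInvariantMeasure G X ν] (x₀ : X) :
    ν = orbitMeasure μ x₀ := by
  ext s hs
  calc ν s = ∫⁻ x, orbitMeasure μ x s ∂ν := (lintegral_orbitMeasure_apply μ ν hs).symm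
    _ = ∫⁻ _, orbitMeasure μ x₀ s ∂ν := by
        refine lintegral_congr fun x ↦ ?_
        obtain ⟨g, rfl⟩ := exists_smul_eq G x₀ x
        rw [orbitMeasure_smul]
    _ = orbitMeasure μ x₀ s := by simp

end OrbitMeasure

theorem existsUnique_invariant_probabilityMeasure_iff_transitive_general
    {G X : Type*} [Group G] [TopologicalSpace G] [IsTopologicalGroup G]
    [CompactSpace G] [SecondCountableTopology G]
    [TopologicalSpace X] [T2Space X]
    [Nonempty X] [MeasurableSpace X] [BorelSpace X]
    [MulAction G X] [ContinuousSMul G X] :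
    (∃! ν : Measure X, IsProbabilityMeasure ν ∧
        ∀ g : G, Measure.map (fun x => g • x) ν = ν) ↔
      ∀ x y : X, ∃ g : G, g • x = y := by
  borelize G
  obtain ⟨μ, _, _⟩ := exists_isHaarMeasure_isProbabilityMeasure G
  have := isMulRightInvariant_of_isProbabilityMeasure μ
  simp_rw [fun ν : Measure X ↦ ((smulInvariantMeasure_tfae G ν).out 0 5).symm]
  constructor
  · rintro ⟨ν, -, huniq⟩ x y
    have hx := huniq (orbitMeasure μ x) ⟨inferInstance, inferInstance⟩
    have hy := huniq (orbitMeasure μ y) ⟨inferInstance, inferInstance⟩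
    exact mem_orbit_of_orbitMeasure_eq μ (isCompact_orbit x).isClosed.measurableSet
      (hx.trans hy.symm)
  · intro htrans
    have : IsPretransitive G X := ⟨htrans⟩
    obtain ⟨x₀⟩ := ‹Nonempty X›
    exact ⟨orbitMeasure μ x₀, ⟨inferInstance, inferInstance⟩,
      fun ν ⟨_, _⟩ ↦ eq_orbitMeasure_of_isPretransitive μ ν x₀⟩

/-- For a compact Hausdorff second-countable group `G` acting continuously on a nonempty
compact Hausdorff second-countable space `X`, there is exactly one `G`-invariant Borel
probability measure on `X` iff the action is transitive. -/
theorem existsUnique_invariant_probabilityMeasure_iff_transitive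
    {G X : Type*} [Group G] [TopologicalSpace G] [IsTopologicalGroup G]
    [CompactSpace G] [T2Space G] [SecondCountableTopology G]
    [TopologicalSpace X] [CompactSpace X] [T2Space X] [SecondCountableTopology X]
    [Nonempty X] [MeasurableSpace X] [BorelSpace X]
    [MulAction G X] [ContinuousSMul G X] :
    (∃! ν : Measure X, IsProbabilityMeasure ν ∧
        ∀ g : G, Measure.map (fun x => g • x) ν = ν) ↔
      ∀ x y : X, ∃ g : G, g • x = y :=
  existsUnique_invariant_probabilityMeasure_iff_transitive_general
end

section
/- Let G be a compact Hausdorff second-countable topological group with Haar probability measure μ_G, acting continuously on a Hausdorff topological space X equipped with its Borel σ-algebra. If x₀, x₁ ∈ X lie in different orbits, i.e. there is no g ∈ G with g•x₀ = x₁, then the pushforward of μ_G along g ↦ g•x₀ and the pushforward of μ_G along g ↦ g•x₁ are mutually singular Borel probability measures; in particular they are distinct. -/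
/-!
The orbit of `x₀` is the continuous image of the compact group `G`, hence compact and so closed
(thus Borel) in the Hausdorff space `X`. The pushforward along `g ↦ g • x₀` is concentrated on this
orbit, while the pushforward along `g ↦ g • x₁` is concentrated on the orbit of `x₁`, which is
disjoint from it. Two mutually singular probability measures cannot coincide.
-/

open MeasureTheory Set

theorem MeasureTheory.Measure.mutuallySingular_map_of_disjoint_range
    {α β γ : Type*} [MeasurableSpace α] [MeasurableSpace β] [MeasurableSpace γ]
    {μ : Measure α} {ν : Measure β} {f : α → γ} {g : β → γ}
    (hf : Measurable f) (hg : Measurable g)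
    (hmeas : MeasurableSet (range f)) (hdisj : Disjoint (range f) (range g)) :
    μ.map f ⟂ₘ ν.map g := by
  refine ⟨(range f)ᶜ, hmeas.compl, ?_, ?_⟩
  · rw [Measure.map_apply hf hmeas.compl, preimage_compl, preimage_range, compl_univ,
      measure_empty]
  · rw [compl_compl, Measure.map_apply hg hmeas, preimage_eq_empty hdisj, measure_empty]

namespace MulAction

theorem disjoint_orbit_of_notMem_orbit {G X : Type*} [Group G] [MulAction G X] {x₀ x₁ : X}
    (h : x₁ ∉ orbit G x₀) : Disjoint (orbit G x₀) (orbit G x₁) :=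
  (orbit.eq_or_disjoint x₀ x₁).resolve_left fun heq => h (heq ▸ mem_orbit_self x₁)

theorem isCompact_orbit_s8 {G X : Type*} [Monoid G] [TopologicalSpace G] [CompactSpace G]
    [TopologicalSpace X] [MulAction G X] [ContinuousSMul G X] (x : X) :
    IsCompact (orbit G x) :=
  isCompact_range (continuous_id.smul continuous_const)

end MulAction

theorem pushforward_haar_mutuallySingular_of_differentOrbit_general
    {G X : Type*} [Group G] [TopologicalSpace G]
    [CompactSpace G]
    [MeasurableSpace G] [BorelSpace G]
    (μ : Measure G) [IsProbabilityMeasure μ]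
    [TopologicalSpace X] [T2Space X] [MeasurableSpace X] [BorelSpace X]
    [MulAction G X] [ContinuousSMul G X] (x₀ x₁ : X)
    (hx : ¬ ∃ g : G, g • x₀ = x₁) :
    (Measure.map (fun g : G => g • x₀) μ) ⟂ₘ (Measure.map (fun g : G => g • x₁) μ) ∧
      Measure.map (fun g : G => g • x₀) μ ≠ Measure.map (fun g : G => g • x₁) μ := by
  have hsmul (x : X) : Measurable fun g : G => g • x :=
    (continuous_id.smul continuous_const).measurable
  have hsing : μ.map (· • x₀) ⟂ₘ μ.map (· • x₁) :=
    Measure.mutuallySingular_map_of_disjoint_range (hsmul x₀) (hsmul x₁)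
      (MulAction.isCompact_orbit_s8 x₀).isClosed.measurableSet
      (MulAction.disjoint_orbit_of_notMem_orbit (MulAction.mem_orbit_iff.not.mpr hx))
  refine ⟨hsing, fun heq => ?_⟩
  rw [← heq, Measure.MutuallySingular.self_iff] at hsing
  have := Measure.isProbabilityMeasure_map (μ := μ) (hsmul x₀).aemeasurable
  exact IsProbabilityMeasure.ne_zero _ hsing

/-- Points in different orbits of a continuous action of a compact Hausdorff second-countable
group `G` on a Hausdorff Borel space `X` induce mutually singular (in particular, distinct)
pushforwards of the Haar probability measure along their orbit maps. -/
theorem pushforward_haar_mutuallySingular_of_differentOrbit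
    {G X : Type*} [Group G] [TopologicalSpace G] [IsTopologicalGroup G]
    [CompactSpace G] [T2Space G] [SecondCountableTopology G]
    [MeasurableSpace G] [BorelSpace G]
    (μ : Measure G) [μ.IsHaarMeasure] [IsProbabilityMeasure μ]
    [TopologicalSpace X] [T2Space X] [MeasurableSpace X] [BorelSpace X]
    [MulAction G X] [ContinuousSMul G X] (x₀ x₁ : X)
    (hx : ¬ ∃ g : G, g • x₀ = x₁) :
    (Measure.map (fun g : G => g • x₀) μ) ⟂ₘ (Measure.map (fun g : G => g • x₁) μ) ∧
      Measure.map (fun g : G => g • x₀) μ ≠ Measure.map (fun g : G => g • x₁) μ :=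
  pushforward_haar_mutuallySingular_of_differentOrbit_general μ x₀ x₁ hx
end

section
/- Let M be a nonempty compact Hausdorff topological monoid (a monoid with jointly continuous multiplication on a compact Hausdorff space). Then the set of units of M, i.e. {x ∈ M : ∃ y ∈ M, x·y = 1 and y·x = 1}, is a closed subset of M. -/
/-!
The units are the first projection of the closed set of pairs of mutual inverses in `M × M`,
and projecting away a compact factor is a closed map.
-/

theorem isClosed_setOf_mul_eq_one_and_mul_eq_one {M : Type*} [Mul M] [One M]
    [TopologicalSpace M] [T1Space M] [ContinuousMul M] :
    IsClosed {p : M × M | p.1 * p.2 = 1 ∧ p.2 * p.1 = 1} :=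
  (isClosed_singleton.preimage continuous_mul).inter
    (isClosed_singleton.preimage (continuous_mul.comp continuous_swap))

theorem isClosed_units_of_compact_monoid_general
    {M : Type*} [Monoid M] [TopologicalSpace M] [CompactSpace M] [T2Space M]
    [ContinuousMul M] :
    IsClosed {x : M | ∃ y : M, x * y = 1 ∧ y * x = 1} := by
  have hproj := isClosedMap_fst_of_compactSpace (X := M) (Y := M) _
    isClosed_setOf_mul_eq_one_and_mul_eq_one
  convert hproj using 1
  ext x
  simp

/-- In a nonempty compact Hausdorff topological monoid, the set of (two-sided) units is
closed. -/
theorem isClosed_units_of_compact_monoid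
    {M : Type*} [Monoid M] [TopologicalSpace M] [CompactSpace M] [T2Space M]
    [Nonempty M] [ContinuousMul M] :
    IsClosed {x : M | ∃ y : M, x * y = 1 ∧ y * x = 1} :=
  isClosed_units_of_compact_monoid_general
end

section
/- Let V be a finite-dimensional real normed vector space, let C ⊆ V be a closed convex cone that spans V and is pointed (C ∩ (−C) = {0}), and let u : V → ℝ be a linear functional with u(x) > 0 for every nonzero x ∈ C. Let S = {x ∈ C : u(x) = 1}, and assume S is compact and contains at least two points. Then for every extreme point ψ₁ of S there exist an extreme point ψ₂ of S and a linear functional a : V → ℝ such that 0 ≤ a(x) ≤ u(x) for all x ∈ C, a(ψ₁) = 0, and a(ψ₂) = 1. -/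
/-!
Since `C` spans `V`, it has nonempty interior, and an extreme point `ψ₁` of the base `S` cannot
lie in that interior: otherwise `ψ₁` could be pushed slightly past itself along the line through
another point of `S`, exhibiting it as an interior point of a segment in `S`. A functional
supporting `C` at `ψ₁` is then nonnegative on `C`, vanishes at `ψ₁` and is positive somewhere on
`C`. By compactness it attains its (positive) maximum over `S` at an extreme point `ψ₂`, and
dividing by that maximum gives the effect; its bounds on `C` follow from those on `S` by
homogeneity.
-/

open Set Filter Topology

section TopologicalVectorSpace

variable {E : Type*} [AddCommGroup E] [Module ℝ E] [TopologicalSpace E]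

theorem notMem_interior_of_mem_extremePoints_level [ContinuousAdd E] [ContinuousSMul ℝ E]
    {C : Set E} {u : E →ₗ[ℝ] ℝ} {c : ℝ} {x p : E}
    (hx : x ∈ extremePoints ℝ {y ∈ C | u y = c}) (hpC : p ∈ C) (hup : u p = c) (hpx : p ≠ x) :
    x ∉ interior C := by
  intro hxC
  have hline : Tendsto (fun t : ℝ => x + t • (x - p)) (𝓝[>] 0) (𝓝 x) := by
    have hcont : Continuous fun t : ℝ => x + t • (x - p) := by fun_prop
    exact (hcont.tendsto' 0 x (by simp)).mono_left nhdsWithin_le_nhds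
  obtain ⟨t, htC, ht : 0 < t⟩ :=
    ((hline.eventually (isOpen_interior.mem_nhds hxC)).and self_mem_nhdsWithin).exists
  have hseg : x ∈ openSegment ℝ p (x + t • (x - p)) := by
    refine ⟨t / (1 + t), 1 / (1 + t), by positivity, by positivity, by field_simp; ring, ?_⟩
    rw [smul_add, smul_smul, ← add_assoc, ← sub_eq_zero]
    match_scalars <;> field_simp <;> ring
  have hut : u (x + t • (x - p)) = c := by simp [hup, hx.1.2]
  exact hpx (hx.2 ⟨hpC, hup⟩ ⟨interior_subset htC, hut⟩ hseg)

theorem IsCompact.exists_mem_extremePoints_isMaxOn [T2Space E] [IsTopologicalAddGroup E]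
    [ContinuousSMul ℝ E] [LocallyConvexSpace ℝ E] {s : Set E} (hs : IsCompact s)
    (hne : s.Nonempty) (l : StrongDual ℝ E) : ∃ x ∈ s.extremePoints ℝ, IsMaxOn l s x := by
  obtain ⟨z, hzs, hz⟩ := hs.exists_isMaxOn hne l.continuous.continuousOn
  have hexp : IsExposed ℝ s (l.toExposed s) := ContinuousLinearMap.toExposed.isExposed
  obtain ⟨x, hx⟩ := (hexp.isCompact hs).extremePoints_nonempty ⟨z, hzs, hz⟩
  exact ⟨x, hexp.isExtreme.extremePoints_subset_extremePoints hx, hx.1.2⟩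

theorem exists_nonneg_dual_of_notMem_interior [IsTopologicalAddGroup E] [ContinuousSMul ℝ E]
    {C : Set E} (hconv : Convex ℝ C) (hcone : ∀ r : ℝ, 0 ≤ r → ∀ x ∈ C, r • x ∈ C)
    (hspan : Submodule.span ℝ C = ⊤) (hint : (interior C).Nonempty) {x : E} (hxC : x ∈ C)
    (hx : x ∉ interior C) :
    ∃ f : StrongDual ℝ E, (∀ y ∈ C, 0 ≤ f y) ∧ f x = 0 ∧ ∃ y ∈ C, 0 < f y := by
  obtain ⟨f, hf, hle⟩ := geometric_hahn_banach_of_nonempty_interior_point hconv hx hint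
  have hfx_nonneg : 0 ≤ f x := by simpa using hle 0 (by simpa using hcone 0 le_rfl x hxC)
  -- `f` is bounded above on the cone `C`, hence nonpositive there
  have hnonpos : ∀ y ∈ C, f y ≤ 0 := by
    intro y hy
    by_contra! hpos
    have := hle _ (hcone ((f x + 1) / f y) (by positivity) y hy)
    rw [map_smul, smul_eq_mul, div_mul_cancel₀ _ hpos.ne'] at this
    linarith
  have hfx : f x = 0 := le_antisymm (hnonpos x hxC) hfx_nonneg
  obtain ⟨y, hyC, hy⟩ : ∃ y ∈ C, f y ≠ 0 := by
    by_contra! h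
    exact hf (ContinuousLinearMap.coe_injective (LinearMap.ext_on hspan (g := 0) h))
  exact ⟨-f, fun y hy => by simpa using hnonpos y hy, by simp [hfx], y, hyC,
    by simpa using (hnonpos y hyC).lt_of_ne hy⟩

end TopologicalVectorSpace

theorem Convex.interior_nonempty_of_zero_mem_of_span_eq_top {V : Type*} [NormedAddCommGroup V]
    [NormedSpace ℝ V] [FiniteDimensional ℝ V] {C : Set V} (hC : Convex ℝ C) (h0 : (0 : V) ∈ C)
    (hspan : Submodule.span ℝ C = ⊤) : (interior C).Nonempty := by
  rw [hC.interior_nonempty_iff_affineSpan_eq_top, ← insert_eq_of_mem h0,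
    ← AffineSubspace.coe_eq_univ_iff, affineSpan_insert_zero, hspan, Submodule.top_coe]

section Cone

variable {V : Type*} [AddCommGroup V] [Module ℝ V] {C : Set V} {u : V →ₗ[ℝ] ℝ}

theorem inv_smul_mem_level_one (hcone : ∀ r : ℝ, 0 ≤ r → ∀ x ∈ C, r • x ∈ C)
    (hu : ∀ x ∈ C, x ≠ 0 → 0 < u x) {x : V} (hxC : x ∈ C) (hx : x ≠ 0) :
    (u x)⁻¹ • x ∈ {y ∈ C | u y = 1} :=
  ⟨hcone _ (inv_nonneg.2 (hu x hxC hx).le) x hxC, by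
    rw [map_smul, smul_eq_mul, inv_mul_cancel₀ (hu x hxC hx).ne']⟩

theorem forall_mem_cone_le_of_forall_mem_level_one
    (hcone : ∀ r : ℝ, 0 ≤ r → ∀ x ∈ C, r • x ∈ C) (hu : ∀ x ∈ C, x ≠ 0 → 0 < u x)
    {a : V →ₗ[ℝ] ℝ} (ha : ∀ s ∈ {y ∈ C | u y = 1}, 0 ≤ a s ∧ a s ≤ 1) :
    ∀ x ∈ C, 0 ≤ a x ∧ a x ≤ u x := by
  intro x hxC
  rcases eq_or_ne x 0 with rfl | hx
  · simp
  have hux := hu x hxC hx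
  obtain ⟨h0, h1⟩ := ha _ (inv_smul_mem_level_one hcone hu hxC hx)
  rw [map_smul, smul_eq_mul] at h0 h1
  constructor
  · simpa [hux] using h0
  · simpa [inv_mul_le_iff₀ hux] using h1

end Cone

theorem exists_perfectly_distinguishing_effect_general
    {V : Type*} [NormedAddCommGroup V] [NormedSpace ℝ V] [FiniteDimensional ℝ V]
    (C : Set V) (hCconv : Convex ℝ C)
    (hCcone : ∀ r : ℝ, 0 ≤ r → ∀ x ∈ C, r • x ∈ C)
    (hCspan : Submodule.span ℝ C = ⊤)
    (u : V →ₗ[ℝ] ℝ) (hu : ∀ x ∈ C, x ≠ 0 → 0 < u x)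
    (S : Set V) (hS : S = {x ∈ C | u x = 1})
    (hScompact : IsCompact S) (hStwo : ∃ x ∈ S, ∃ y ∈ S, x ≠ y)
    (ψ₁ : V) (hψ₁ : ψ₁ ∈ Set.extremePoints ℝ S) :
    ∃ ψ₂ ∈ Set.extremePoints ℝ S, ∃ a : V →ₗ[ℝ] ℝ,
      (∀ x ∈ C, 0 ≤ a x ∧ a x ≤ u x) ∧ a ψ₁ = 0 ∧ a ψ₂ = 1 := by
  subst hS
  obtain ⟨p, hp, hpψ₁⟩ : ∃ p ∈ {x ∈ C | u x = 1}, p ≠ ψ₁ := by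
    obtain ⟨x, hx, y, hy, hxy⟩ := hStwo
    by_cases h : x = ψ₁
    · exact ⟨y, hy, fun hy' => hxy (h.trans hy'.symm)⟩
    · exact ⟨x, hx, h⟩
  have hψ₁C : ψ₁ ∈ C := hψ₁.1.1
  have hint : (interior C).Nonempty := hCconv.interior_nonempty_of_zero_mem_of_span_eq_top
    (by simpa using hCcone 0 le_rfl ψ₁ hψ₁C) hCspan
  obtain ⟨f, hfC, hfψ₁, z, hzC, hfz⟩ := exists_nonneg_dual_of_notMem_interior hCconv hCcone
    hCspan hint hψ₁C (notMem_interior_of_mem_extremePoints_level hψ₁ hp.1 hp.2 hpψ₁)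
  obtain ⟨ψ₂, hψ₂, hmax⟩ := hScompact.exists_mem_extremePoints_isMaxOn ⟨ψ₁, hψ₁.1⟩ f
  have hz : z ≠ 0 := by rintro rfl; simp at hfz
  have hfψ₂ : 0 < f ψ₂ := calc
    0 < (u z)⁻¹ * f z := mul_pos (inv_pos.2 (hu z hzC hz)) hfz
    _ = f ((u z)⁻¹ • z) := by simp
    _ ≤ f ψ₂ := hmax (inv_smul_mem_level_one hCcone hu hzC hz)
  refine ⟨ψ₂, hψ₂, (f ψ₂)⁻¹ • (f : V →ₗ[ℝ] ℝ),
    forall_mem_cone_le_of_forall_mem_level_one hCcone hu fun s hs => ?_,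
    by simp [hfψ₁], by simp [hfψ₂.ne']⟩
  simp only [LinearMap.smul_apply, ContinuousLinearMap.coe_coe, smul_eq_mul]
  exact ⟨mul_nonneg (inv_nonneg.2 hfψ₂.le) (hfC s hs.1),
    inv_mul_le_one_of_le₀ (hmax hs) hfψ₂.le⟩

/-- In an unrestricted theory, every pure state `ψ₁` is perfectly distinguishable from some
other pure state `ψ₂`: abstractly, if `C` is a spanning pointed closed convex cone in a
finite-dimensional real normed space, `u` a linear functional strictly positive on
`C \ {0}`, and `S = {x ∈ C | u x = 1}` is compact with at least two points, then for every
extreme point `ψ₁` of `S` there are an extreme point `ψ₂` of `S` and a linear functional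
`a` with `0 ≤ a ≤ u` on `C`, `a ψ₁ = 0` and `a ψ₂ = 1`. -/
theorem exists_perfectly_distinguishing_effect
    {V : Type*} [NormedAddCommGroup V] [NormedSpace ℝ V] [FiniteDimensional ℝ V]
    (C : Set V) (hCclosed : IsClosed C) (hCconv : Convex ℝ C)
    (hCcone : ∀ r : ℝ, 0 ≤ r → ∀ x ∈ C, r • x ∈ C)
    (hCspan : Submodule.span ℝ C = ⊤)
    (hCpointed : ∀ x ∈ C, -x ∈ C → x = 0)
    (u : V →ₗ[ℝ] ℝ) (hu : ∀ x ∈ C, x ≠ 0 → 0 < u x)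
    (S : Set V) (hS : S = {x ∈ C | u x = 1})
    (hScompact : IsCompact S) (hStwo : ∃ x ∈ S, ∃ y ∈ S, x ≠ y)
    (ψ₁ : V) (hψ₁ : ψ₁ ∈ Set.extremePoints ℝ S) :
    ∃ ψ₂ ∈ Set.extremePoints ℝ S, ∃ a : V →ₗ[ℝ] ℝ,
      (∀ x ∈ C, 0 ≤ a x ∧ a x ≤ u x) ∧ a ψ₁ = 0 ∧ a ψ₂ = 1 :=
  exists_perfectly_distinguishing_effect_general C hCconv hCcone hCspan u hu S hS hScompact hStwo ψ₁
    hψ₁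
end

section
/- Let C ⊆ ℝ³ be the conical hull of the three vectors (1,1,0), (1,0,1), (0,1,1) (equivalently, C = {c ∈ ℝ³ : c₀ ≤ c₁ + c₂, c₁ ≤ c₀ + c₂, c₂ ≤ c₀ + c₁}), and let Δ = {x ∈ ℝ³ : x ≥ 0, x₀ + x₁ + x₂ = 1} be the standard simplex. Then there do not exist c ∈ C with (1,1,1) − c ∈ C and p, q ∈ Δ such that c₀p₀ + c₁p₁ + c₂p₂ = 1 and c₀q₀ + c₁q₁ + c₂q₂ = 0. -/
/-!
An effect `c` with `c` and `(1,1,1) - c` both in the cone has all coordinates in `[0, 1]`.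
Probability `1` on a state `p` forces `c i = 1` at some `i` in the support of `p`, and
probability `0` on `q` forces `c j = 0` at some `j`. But the cone inequalities
`c i ≤ c j + c k` and `1 - c j ≤ (1 - c i) + (1 - c k)` then give `c k ≥ 1` and `c k ≤ 0`.
-/

def restrictedTritCone : Set (Fin 3 → ℝ) :=
  {c | ∃ a b e : ℝ, 0 ≤ a ∧ 0 ≤ b ∧ 0 ≤ e ∧
    c = a • (![1, 1, 0] : Fin 3 → ℝ) + b • (![1, 0, 1] : Fin 3 → ℝ) +
      e • (![0, 1, 1] : Fin 3 → ℝ)}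

def tritSimplex : Set (Fin 3 → ℝ) :=
  {x | (∀ i, 0 ≤ x i) ∧ x 0 + x 1 + x 2 = 1}

theorem Finset.exists_eq_zero_of_sum_mul_eq_zero {ι R : Type*} [Semiring R] [PartialOrder R]
    [IsOrderedRing R] [NoZeroDivisors R] {s : Finset ι} {w x : ι → R}
    (hw : ∀ i ∈ s, 0 ≤ w i) (hx : ∀ i ∈ s, 0 ≤ x i) (hx_sum : ∑ i ∈ s, x i ≠ 0)
    (h : ∑ i ∈ s, w i * x i = 0) : ∃ i ∈ s, w i = 0 := by
  obtain ⟨i, hi, hxi⟩ := Finset.exists_ne_zero_of_sum_ne_zero hx_sum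
  have hwx := (Finset.sum_eq_zero_iff_of_nonneg fun j hj ↦ mul_nonneg (hw j hj) (hx j hj)).mp h
  exact ⟨i, hi, (mul_eq_zero.mp (hwx i hi)).resolve_right hxi⟩

namespace restrictedTritCone

theorem le_add {c : Fin 3 → ℝ} (hc : c ∈ restrictedTritCone) :
    c 0 ≤ c 1 + c 2 ∧ c 1 ≤ c 0 + c 2 ∧ c 2 ≤ c 0 + c 1 := by
  obtain ⟨a, b, e, ha, hb, he, rfl⟩ := hc
  simp only [Pi.add_apply, Pi.smul_apply, smul_eq_mul, Matrix.cons_val_zero, Matrix.cons_val_one,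
    Matrix.cons_val_two, Matrix.head_cons, Matrix.tail_cons]
  refine ⟨?_, ?_, ?_⟩ <;> linarith

theorem nonneg {c : Fin 3 → ℝ} (hc : c ∈ restrictedTritCone) (i : Fin 3) : 0 ≤ c i := by
  obtain ⟨h0, h1, h2⟩ := le_add hc
  fin_cases i <;> dsimp <;> linarith

theorem le_one {c : Fin 3 → ℝ} (hc : ((![1, 1, 1] : Fin 3 → ℝ) - c) ∈ restrictedTritCone)
    (i : Fin 3) : c i ≤ 1 := by
  have := nonneg hc i
  fin_cases i <;> simp_all

theorem not_eq_one_and_eq_zero {c : Fin 3 → ℝ} (hc : c ∈ restrictedTritCone)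
    (hc' : ((![1, 1, 1] : Fin 3 → ℝ) - c) ∈ restrictedTritCone) {i j : Fin 3}
    (hi : c i = 1) (hj : c j = 0) : False := by
  obtain ⟨h0, h1, h2⟩ := le_add hc
  obtain ⟨k0, k1, k2⟩ := le_add hc'
  simp only [Pi.sub_apply, Matrix.cons_val_zero, Matrix.cons_val_one, Matrix.cons_val_two,
    Matrix.head_cons, Matrix.tail_cons] at k0 k1 k2
  fin_cases i <;> fin_cases j <;> simp_all <;> linarith

end restrictedTritCone

/-- The restricted trit has no perfectly distinguishable pair of states: there is no allowed
effect `c` (an element of the restricted effect cone whose complement `(1,1,1) − c` is also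
in the cone) together with states `p`, `q` of the trit such that `c` occurs with probability
`1` on `p` and probability `0` on `q`. -/
theorem restrictedTrit_no_perfectly_distinguishable_states :
    ¬ ∃ c ∈ restrictedTritCone,
        ((![1, 1, 1] : Fin 3 → ℝ) - c) ∈ restrictedTritCone ∧
        ∃ p ∈ tritSimplex, ∃ q ∈ tritSimplex,
          c 0 * p 0 + c 1 * p 1 + c 2 * p 2 = 1 ∧
          c 0 * q 0 + c 1 * q 1 + c 2 * q 2 = 0 := by
  rintro ⟨c, hc, hc', p, ⟨hp, hp_sum⟩, q, ⟨hq, hq_sum⟩, hcp, hcq⟩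
  obtain ⟨i, -, hi⟩ : ∃ i ∈ Finset.univ, 1 - c i = 0 :=
    Finset.exists_eq_zero_of_sum_mul_eq_zero
      (fun i _ ↦ sub_nonneg.mpr (restrictedTritCone.le_one hc' i)) (fun i _ ↦ hp i)
      (by simp [Fin.sum_univ_three, hp_sum]) (by rw [Fin.sum_univ_three]; linear_combination hp_sum - hcp)
  obtain ⟨j, -, hj⟩ : ∃ j ∈ Finset.univ, c j = 0 :=
    Finset.exists_eq_zero_of_sum_mul_eq_zero (fun j _ ↦ restrictedTritCone.nonneg hc j)
      (fun j _ ↦ hq j) (by simp [Fin.sum_univ_three, hq_sum]) (by rwa [Fin.sum_univ_three])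
  exact restrictedTritCone.not_eq_one_and_eq_zero hc hc' (sub_eq_zero.mp hi).symm hj
end
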